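/- If c·h_parity is entropic for a constant c > 0, where h_parity is the parity entropy function on three variables (value 1 on singletons, 2 on larger nonempty sets), then c = log₂ M for some positive integer M. Consequently, the set Γ₃* of entropic functions on three variables is not convex. -/

import Mathlib

/-- Shannon entropy (base 2) of the pushforward of `p` along `f`. -/
noncomputable def mEntropy {Ω α : Type*} [Fintype Ω] [DecidableEq α]
    (p : Ω → ℝ) (f : Ω → α) : ℝ :=
  ∑ a ∈ Finset.univ.image f,
    Real.negMulLog (∑ ω ∈ Finset.univ.filter (fun ω => f ω = a), p ω) / Real.log 2

/-- The entropy function of joint random variables `X` under the distribution `p`. -/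
noncomputable def entFn {V Ω D : Type*} [Fintype V] [DecidableEq V] [Fintype Ω]
    [DecidableEq D] (p : Ω → ℝ) (X : V → Ω → D) (S : Finset V) : ℝ :=
  mEntropy p (fun ω => fun v : {v // v ∈ S} => X v.1 ω)

/-- `g` is entropic if it is the entropy function of a joint distribution of
finitely-valued random variables indexed by `V`. -/
def IsEntropic {V : Type*} [Fintype V] [DecidableEq V] (g : Finset V → ℝ) : Prop :=
  ∃ (m : ℕ) (p : Fin m → ℝ) (X : V → Fin m → ℕ),
    (∀ i, 0 ≤ p i) ∧ (∑ i, p i = 1) ∧ ∀ S, g S = entFn p X S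

/-- The parity entropy function on three variables. -/
def hparity : Finset (Fin 3) → ℝ := fun S => if S = ∅ then 0 else if S.card = 1 then 1 else 2

/-!
Let `c · h_parity` be the entropy function of `(X₀, X₁, X₂)`. Then `H(Xᵢ Xⱼ) = H(Xᵢ) + H(Xⱼ)`
is the equality case of subadditivity, so the variables are pairwise independent, and
`H(Xᵢ Xⱼ) = H(X₀ X₁ X₂)` is the equality case of monotonicity, so any two of them determine the
third on the support. So at a point `ω` of the support the mass of `(X₀ ω, X₁ ω, X₂ ω)` equals
both `P(X₀ = X₀ ω) P(X₂ = X₂ ω)` and `P(X₁ = X₁ ω) P(X₂ = X₂ ω)`: the marginals of `X₀` and `X₁`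
agree along the support. As every pair of values of `X₀` and `X₁` is realised, `X₀` is uniform
on its support, of some size `M`, and `c = H(X₀) = log₂ M`.

Conversely `(a, b, a + b)` with `(a, b)` uniform on `G × G`, for a finite abelian group `G`,
realises `log₂ |G| · h_parity`. The midpoint of the cases `|G| = 2` and `|G| = 4` is
`(log₂ 8 / 2) · h_parity`, which is not of the form `log₂ M · h_parity`.
-/
open Finset Real InformationTheory

section Law

variable {Ω α β : Type*} [Fintype Ω] [DecidableEq α] [DecidableEq β] {p : Ω → ℝ}

noncomputable def law (p : Ω → ℝ) (f : Ω → α) (a : α) : ℝ :=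
  ∑ ω ∈ univ.filter (fun ω => f ω = a), p ω

lemma law_nonneg (hp0 : ∀ ω, 0 ≤ p ω) (f : Ω → α) (a : α) : 0 ≤ law p f a :=
  sum_nonneg fun ω _ => hp0 ω

lemma law_le_law_comp (hp0 : ∀ ω, 0 ≤ p ω) (φ : α → β) (f : Ω → α) (a : α) :
    law p f a ≤ law p (fun ω => φ (f ω)) (φ a) :=
  sum_le_sum_of_subset_of_nonneg (fun ω => by simp_all) fun ω _ _ => hp0 ω

lemma law_pos (hp0 : ∀ ω, 0 ≤ p ω) (f : Ω → α) {ω : Ω} (hω : 0 < p ω) :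
    0 < law p f (f ω) :=
  hω.trans_le <| single_le_sum (fun ω _ => hp0 ω) (by simp)

lemma exists_pos_of_law_pos {f : Ω → α} {a : α} (h : 0 < law p f a) :
    ∃ ω, 0 < p ω ∧ f ω = a := by
  have hsum : ∑ ω ∈ univ.filter (fun ω => f ω = a), (0 : ℝ) < law p f a := by simpa using h
  obtain ⟨ω, hω, hpos⟩ := exists_lt_of_sum_lt hsum
  exact ⟨ω, hpos, (mem_filter.1 hω).2⟩

lemma law_const (r : ℝ) (f : Ω → α) (a : α) :
    law (fun _ => r) f a = #(univ.filter fun ω => f ω = a) * r := by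
  simp [law]

lemma sum_law_mul_of_mapsTo {f : Ω → α} {t : Finset α} (ht : ∀ ω, f ω ∈ t) (F : α → ℝ) :
    ∑ a ∈ t, law p f a * F a = ∑ ω, p ω * F (f ω) := by
  rw [← sum_fiberwise_of_maps_to (fun ω _ => ht ω)]
  refine sum_congr rfl fun a _ => ?_
  rw [law, sum_mul]
  exact sum_congr rfl fun ω hω => by rw [(mem_filter.1 hω).2]

lemma sum_law_of_mapsTo {f : Ω → α} {t : Finset α} (ht : ∀ ω, f ω ∈ t) :
    ∑ a ∈ t, law p f a = ∑ ω, p ω := by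
  simpa using sum_law_mul_of_mapsTo (p := p) ht 1

lemma mEntropy_mul_log_two (f : Ω → α) :
    mEntropy p f * log 2 = -∑ ω, p ω * log (law p f (f ω)) := by
  have hlog : log 2 ≠ 0 := by positivity
  have h : mEntropy p f = (∑ a ∈ univ.image f, negMulLog (law p f a)) / log 2 := by
    rw [sum_div]; rfl
  rw [h, div_mul_cancel₀ _ hlog, ← sum_law_mul_of_mapsTo (fun ω => mem_image_of_mem f (mem_univ ω))
    (fun a => log (law p f a)), ← sum_neg_distrib]
  simp only [negMulLog, neg_mul]

lemma law_comp_of_injective {φ : α → β} (hφ : φ.Injective) (f : Ω → α) (a : α) :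
    law p (fun ω => φ (f ω)) (φ a) = law p f a := by
  simp only [law, hφ.eq_iff]

lemma mEntropy_comp_of_injective {φ : α → β} (hφ : φ.Injective) (f : Ω → α) :
    mEntropy p (fun ω => φ (f ω)) = mEntropy p f := by
  have hlog : log 2 ≠ 0 := by positivity
  refine mul_right_cancel₀ hlog ?_
  rw [mEntropy_mul_log_two, mEntropy_mul_log_two]
  simp only [law_comp_of_injective hφ]

lemma eq_of_sum_mul_log_eq {ι : Type*} {s : Finset ι} {u v : ι → ℝ} (hu : ∀ i ∈ s, 0 ≤ u i)
    (hv : ∀ i ∈ s, 0 ≤ v i) (hvu : ∀ i ∈ s, v i = 0 → u i = 0)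
    (hsum : ∑ i ∈ s, v i ≤ ∑ i ∈ s, u i)
    (h : ∑ i ∈ s, u i * log (u i) = ∑ i ∈ s, u i * log (v i)) :
    ∀ i ∈ s, u i = v i := by
  have hterm : ∀ i ∈ s, u i * (log (u i) - log (v i)) - (u i - v i) =
      if v i = 0 then 0 else v i * klFun (u i / v i) := by
    intro i hi
    split_ifs with h0
    · simp [h0, hvu i hi h0]
    rcases (hu i hi).eq_or_lt with hu0 | hu0
    · simp [← hu0, klFun]
    rw [klFun, log_div hu0.ne' h0]
    field_simp
    ring
  have hnonneg : ∀ i ∈ s, 0 ≤ u i * (log (u i) - log (v i)) - (u i - v i) := by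
    intro i hi
    rw [hterm i hi]
    split_ifs
    · rfl
    · exact mul_nonneg (hv i hi)
        (klFun_nonneg (div_nonneg (hu i hi) (hv i hi)))
  have hzero : ∑ i ∈ s, (u i * (log (u i) - log (v i)) - (u i - v i)) = 0 := by
    refine le_antisymm ?_ (sum_nonneg hnonneg)
    simp only [mul_sub, sum_sub_distrib, h]
    linarith
  intro i hi
  have hi0 := (sum_eq_zero_iff_of_nonneg hnonneg).1 hzero i hi
  rw [hterm i hi] at hi0
  split_ifs at hi0 with h0
  · rw [h0, hvu i hi h0]
  have hpos : 0 < v i := (hv i hi).lt_of_ne' h0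
  have := (klFun_eq_zero_iff (div_nonneg (hu i hi) hpos.le)).1
    ((mul_eq_zero.1 hi0).resolve_left h0)
  rwa [div_eq_one_iff_eq h0] at this

lemma law_comp_eq_of_mEntropy_comp_eq (hp0 : ∀ ω, 0 ≤ p ω) (φ : α → β) (f : Ω → α)
    (h : mEntropy p (fun ω => φ (f ω)) = mEntropy p f) {ω : Ω} (hω : 0 < p ω) :
    law p (fun ω => φ (f ω)) (φ (f ω)) = law p f (f ω) := by
  set g := fun ω => φ (f ω)
  have hnonneg : ∀ ω ∈ univ, 0 ≤ p ω * (log (law p g (g ω)) - log (law p f (f ω))) := by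
    intro ω _
    rcases (hp0 ω).eq_or_lt with h0 | h0
    · simp [← h0]
    exact mul_nonneg h0.le
      (sub_nonneg.2 (log_le_log (law_pos hp0 f h0) (law_le_law_comp hp0 φ f (f ω))))
  have hzero : ∑ ω, p ω * (log (law p g (g ω)) - log (law p f (f ω))) = 0 := by
    have hg := mEntropy_mul_log_two (p := p) g
    have hf := mEntropy_mul_log_two (p := p) f
    rw [h] at hg
    simp only [mul_sub, sum_sub_distrib]
    linarith
  have hlog := (sum_eq_zero_iff_of_nonneg hnonneg).1 hzero ω (mem_univ ω)
  rw [mul_eq_zero, sub_eq_zero] at hlog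
  exact log_injOn_pos ((law_pos hp0 f hω).trans_le (law_le_law_comp hp0 φ f (f ω)))
    (law_pos hp0 f hω) (hlog.resolve_left hω.ne')

def IndepLaw (p : Ω → ℝ) (f : Ω → α) (g : Ω → β) : Prop :=
  ∀ a b, law p (fun ω => (f ω, g ω)) (a, b) = law p f a * law p g b

lemma indepLaw_of_mEntropy_prod_eq_add (hp0 : ∀ ω, 0 ≤ p ω) (hp1 : ∑ ω, p ω = 1)
    {f : Ω → α} {g : Ω → β}
    (h : mEntropy p (fun ω => (f ω, g ω)) = mEntropy p f + mEntropy p g) :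
    IndepLaw p f g := by
  intro a b
  -- enlarging the ranges by `a` and `b` makes the Gibbs argument reach the point `(a, b)`
  set T := insert a (univ.image f)
  set U := insert b (univ.image g)
  have hT : ∀ ω, f ω ∈ T := fun ω => mem_insert_of_mem (mem_image_of_mem f (mem_univ ω))
  have hU : ∀ ω, g ω ∈ U := fun ω => mem_insert_of_mem (mem_image_of_mem g (mem_univ ω))
  have hTU : ∀ ω, (f ω, g ω) ∈ T ×ˢ U := fun ω => mem_product.2 ⟨hT ω, hU ω⟩
  have hsum : ∑ c ∈ T ×ˢ U, law p f c.1 * law p g c.2 ≤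
      ∑ c ∈ T ×ˢ U, law p (fun ω => (f ω, g ω)) c := by
    rw [sum_law_of_mapsTo hTU, sum_product, ← sum_mul_sum, sum_law_of_mapsTo hT,
      sum_law_of_mapsTo hU, hp1, one_mul]
  have hlog : ∑ c ∈ T ×ˢ U, law p (fun ω => (f ω, g ω)) c * log (law p (fun ω => (f ω, g ω)) c)
      = ∑ c ∈ T ×ˢ U, law p (fun ω => (f ω, g ω)) c * log (law p f c.1 * law p g c.2) := by
    rw [sum_law_mul_of_mapsTo hTU, sum_law_mul_of_mapsTo hTU]
    have hsplit : ∀ ω, p ω * log (law p f (f ω) * law p g (g ω)) =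
        p ω * log (law p f (f ω)) + p ω * log (law p g (g ω)) := by
      intro ω
      rcases (hp0 ω).eq_or_lt with h0 | h0
      · simp [← h0]
      rw [log_mul (law_pos hp0 f h0).ne' (law_pos hp0 g h0).ne', mul_add]
    have hfg := mEntropy_mul_log_two (p := p) (fun ω => (f ω, g ω))
    have hf := mEntropy_mul_log_two (p := p) f
    have hg := mEntropy_mul_log_two (p := p) g
    simp only [hsplit, sum_add_distrib]
    rw [h, add_mul] at hfg
    linarith
  refine eq_of_sum_mul_log_eq (fun c _ => law_nonneg hp0 _ c)
    (fun c _ => mul_nonneg (law_nonneg hp0 f c.1) (law_nonneg hp0 g c.2)) (fun c _ hc => ?_)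
    hsum hlog (a, b) (mem_product.2 ⟨mem_insert_self a _, mem_insert_self b _⟩)
  have hle₁ : law p (fun ω => (f ω, g ω)) c ≤ law p f c.1 := law_le_law_comp hp0 Prod.fst _ c
  have hle₂ : law p (fun ω => (f ω, g ω)) c ≤ law p g c.2 := law_le_law_comp hp0 Prod.snd _ c
  refine le_antisymm ?_ (law_nonneg hp0 _ c)
  rcases mul_eq_zero.1 hc with hc | hc
  · exact hc ▸ hle₁
  · exact hc ▸ hle₂

lemma mEntropy_eq_logb_inv (hp0 : ∀ ω, 0 ≤ p ω) (hp1 : ∑ ω, p ω = 1) {f : Ω → α} {r : ℝ}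
    (hr : ∀ ω, 0 < p ω → law p f (f ω) = r) :
    mEntropy p f = logb 2 r⁻¹ := by
  have hlog : log 2 ≠ 0 := by positivity
  have hconst : ∑ ω, p ω * log (law p f (f ω)) = ∑ ω, p ω * log r := by
    refine sum_congr rfl fun ω _ => ?_
    rcases (hp0 ω).eq_or_lt with h0 | h0
    · simp [← h0]
    rw [hr ω h0]
  have h := mEntropy_mul_log_two (p := p) f
  rw [hconst, ← sum_mul, hp1, one_mul] at h
  rw [logb, log_inv, eq_div_iff hlog, h]

lemma exists_nat_inv_eq_of_law_eq (hp0 : ∀ ω, 0 ≤ p ω) (hp1 : ∑ ω, p ω = 1) {f : Ω → α}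
    {r : ℝ} (hr : ∀ ω, 0 < p ω → law p f (f ω) = r) :
    ∃ M : ℕ, 0 < M ∧ r⁻¹ = M := by
  set s := (univ.image f).filter fun a => law p f a ≠ 0
  have hs : ∑ a ∈ s, law p f a = 1 := by
    rw [sum_filter_ne_zero, sum_law_of_mapsTo (fun ω => mem_image_of_mem f (mem_univ ω)), hp1]
  have hrs : ∀ a ∈ s, law p f a = r := by
    intro a ha
    obtain ⟨ω, hω, rfl⟩ :=
      exists_pos_of_law_pos ((law_nonneg hp0 f a).lt_of_ne' (mem_filter.1 ha).2)
    exact hr ω hω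
  rw [sum_congr rfl hrs, sum_const, nsmul_eq_mul] at hs
  refine ⟨#s, Nat.pos_of_ne_zero fun h0 => by simp [h0] at hs, ?_⟩
  exact (eq_inv_of_mul_eq_one_left hs).symm

lemma exists_mEntropy_eq_logb_nat (hp0 : ∀ ω, 0 ≤ p ω) (hp1 : ∑ ω, p ω = 1) {f : Ω → α}
    (h : ∀ ω ω', 0 < p ω → 0 < p ω' → law p f (f ω) = law p f (f ω')) :
    ∃ M : ℕ, 0 < M ∧ mEntropy p f = logb 2 M := by
  obtain ⟨ω₀, -, hω₀⟩ := exists_lt_of_sum_lt (s := univ) (f := 0) (g := p) (by simp [hp1])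
  have hr : ∀ ω, 0 < p ω → law p f (f ω) = law p f (f ω₀) := fun ω hω => h ω ω₀ hω hω₀
  obtain ⟨M, hM, hrM⟩ := exists_nat_inv_eq_of_law_eq hp0 hp1 hr
  exact ⟨M, hM, by rw [mEntropy_eq_logb_inv hp0 hp1 hr, hrM]⟩

end Law

section Uniform

variable {Ω Ω' α β : Type*} [Fintype Ω] [Fintype Ω'] [DecidableEq α]

lemma law_comp_equiv (e : Ω' ≃ Ω) (p : Ω → ℝ) (f : Ω → α) (a : α) :
    law (fun ω' => p (e ω')) (fun ω' => f (e ω')) a = law p f a := by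
  rw [law, law, sum_filter, sum_filter]
  exact e.sum_comp fun ω => if f ω = a then p ω else 0

lemma mEntropy_comp_equiv (e : Ω' ≃ Ω) (p : Ω → ℝ) (f : Ω → α) :
    mEntropy (fun ω' => p (e ω')) (fun ω' => f (e ω')) = mEntropy p f := by
  have hlog : log 2 ≠ 0 := by positivity
  refine mul_right_cancel₀ hlog ?_
  rw [mEntropy_mul_log_two, mEntropy_mul_log_two]
  simp only [law_comp_equiv]
  rw [e.sum_comp fun ω => p ω * log (law p f (f ω))]

lemma mEntropy_eq_zero_of_const {p : Ω → ℝ} (hp0 : ∀ ω, 0 ≤ p ω) (hp1 : ∑ ω, p ω = 1)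
    {f : Ω → α} (hf : ∀ ω ω', f ω = f ω') : mEntropy p f = 0 := by
  have hr : ∀ ω, 0 < p ω → law p f (f ω) = 1 := fun ω _ => by
    rw [law, filter_true_of_mem fun ω' _ => hf ω' ω, hp1]
  simp [mEntropy_eq_logb_inv hp0 hp1 hr]

variable [Nonempty Ω]

lemma sum_inv_card : ∑ _ω : Ω, (Fintype.card Ω : ℝ)⁻¹ = 1 := by
  simp [card_univ]

lemma mEntropy_uniform_of_injective {f : Ω → α} (hf : f.Injective) :
    mEntropy (fun _ => (Fintype.card Ω : ℝ)⁻¹) f = logb 2 (Fintype.card Ω) := by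
  have hr : ∀ ω, 0 < (Fintype.card Ω : ℝ)⁻¹ →
      law (fun _ => (Fintype.card Ω : ℝ)⁻¹) f (f ω) = (Fintype.card Ω : ℝ)⁻¹ := by
    intro ω _
    have hfiber : univ.filter (fun ω' => f ω' = f ω) = {ω} := by
      ext
      simp [hf.eq_iff]
    rw [law_const, hfiber, card_singleton, Nat.cast_one, one_mul]
  rw [mEntropy_eq_logb_inv (fun _ => by positivity) sum_inv_card hr, inv_inv]

lemma mEntropy_uniform_of_bijective_prod [Fintype α] [Fintype β] {f : Ω → α} {g : Ω → β}
    (h : (fun ω => (f ω, g ω)).Bijective) :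
    mEntropy (fun _ => (Fintype.card Ω : ℝ)⁻¹) f = logb 2 (Fintype.card α) := by
  have hβ : (Fintype.card β : ℝ) ≠ 0 := by
    have : Nonempty β := ⟨g (Classical.arbitrary Ω)⟩
    positivity
  have hfiber : ∀ a, #(univ.filter fun ω => f ω = a) = Fintype.card β := fun a => by
    rw [card_bijective _ h (t := {a} ×ˢ univ) (by simp [eq_comm]), card_product, card_singleton,
      one_mul, card_univ]
  have hr : ∀ ω, 0 < (Fintype.card Ω : ℝ)⁻¹ →
      law (fun _ => (Fintype.card Ω : ℝ)⁻¹) f (f ω) = (Fintype.card α : ℝ)⁻¹ := by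
    intro ω _
    rw [law_const, hfiber, Fintype.card_of_bijective h, Fintype.card_prod]
    push_cast
    field_simp
  rw [mEntropy_eq_logb_inv (fun _ => by positivity) sum_inv_card hr, inv_inv]

end Uniform

section EntropyFunction

variable {V Ω D : Type*} [Fintype V] [DecidableEq V] [Fintype Ω] [DecidableEq D]

lemma entFn_singleton (p : Ω → ℝ) (X : V → Ω → D) (i : V) :
    entFn p X {i} = mEntropy p (X i) := by
  refine (mEntropy_comp_of_injective (φ := fun F : {v // v ∈ ({i} : Finset V)} → D =>
    F ⟨i, mem_singleton_self i⟩) (fun F G h => ?_) (fun ω v => X v ω)).symm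
  funext ⟨v, hv⟩
  obtain rfl := mem_singleton.1 hv
  exact h

lemma entFn_pair (p : Ω → ℝ) (X : V → Ω → D) (i j : V) :
    entFn p X {i, j} = mEntropy p (fun ω => (X i ω, X j ω)) := by
  refine (mEntropy_comp_of_injective (φ := fun F : {v // v ∈ ({i, j} : Finset V)} → D =>
    (F ⟨i, by simp⟩, F ⟨j, by simp⟩)) (fun F G h => ?_) (fun ω v => X v ω)).symm
  obtain ⟨hi, hj⟩ := Prod.ext_iff.1 h
  funext ⟨v, hv⟩
  rcases mem_insert.1 hv with rfl | hv
  · exact hi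
  · obtain rfl := mem_singleton.1 hv
    exact hj

end EntropyFunction

lemma hparity_singleton (i : Fin 3) : hparity {i} = 1 := by
  simp [hparity]

lemma hparity_of_one_lt_card {S : Finset (Fin 3)} (hS : 1 < #S) : hparity S = 2 := by
  have hne : S ≠ ∅ := by rintro rfl; simp at hS
  simp [hparity, hne, hS.ne']

section Parity

variable {Ω α β γ : Type*} [Fintype Ω] [DecidableEq α] [DecidableEq β] [DecidableEq γ]
  {p : Ω → ℝ}

lemma law_const_of_indepLaw (hp0 : ∀ ω, 0 ≤ p ω) {A : Ω → α} {B : Ω → β} {C : Ω → γ}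
    (hAB : IndepLaw p A B) (hAC : IndepLaw p A C) (hBC : IndepLaw p B C)
    (hdet : ∀ ω, 0 < p ω →
      law p (fun ω => (A ω, C ω)) (A ω, C ω) = law p (fun ω => (B ω, C ω)) (B ω, C ω))
    {ω ω' : Ω} (hω : 0 < p ω) (hω' : 0 < p ω') :
    law p A (A ω) = law p A (A ω') := by
  have hAeqB : ∀ ω, 0 < p ω → law p A (A ω) = law p B (B ω) := by
    intro ω hω
    have h := hdet ω hω
    rw [hAC, hBC] at h
    exact mul_right_cancel₀ (law_pos hp0 C hω).ne' h
  -- independence of `A` and `B` realises the value pair `(A ω', B ω)` with positive mass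
  obtain ⟨ω'', hω'', hA, hB⟩ : ∃ ω'', 0 < p ω'' ∧ A ω'' = A ω' ∧ B ω'' = B ω := by
    have hpos : 0 < law p (fun ω => (A ω, B ω)) (A ω', B ω) := by
      rw [hAB]
      exact mul_pos (law_pos hp0 A hω') (law_pos hp0 B hω)
    obtain ⟨ω'', hω'', h⟩ := exists_pos_of_law_pos hpos
    exact ⟨ω'', hω'', Prod.ext_iff.1 h⟩
  calc law p A (A ω) = law p B (B ω) := hAeqB ω hω
    _ = law p A (A ω'') := by rw [← hB, hAeqB ω'' hω'']
    _ = law p A (A ω') := by rw [hA]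

end Parity

theorem exists_nat_eq_logb_of_isEntropic_mul_hparity {c : ℝ}
    (h : IsEntropic (fun S => c * hparity S)) : ∃ M : ℕ, 0 < M ∧ c = logb 2 M := by
  obtain ⟨m, p, X, hp0, hp1, hX⟩ := h
  simp only at hX
  set J := fun ω (v : {v // v ∈ (univ : Finset (Fin 3))}) => X v ω
  have h1 : ∀ i, mEntropy p (X i) = c := fun i => by
    rw [← entFn_singleton, ← hX, hparity_singleton, mul_one]
  have h2 : ∀ i j, i ≠ j → mEntropy p (fun ω => (X i ω, X j ω)) = 2 * c := fun i j hij => by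
    rw [← entFn_pair, ← hX, hparity_of_one_lt_card (by simp [card_pair hij]), mul_comm]
  have h3 : mEntropy p J = 2 * c := by
    rw [← entFn, ← hX, hparity_of_one_lt_card (by decide), mul_comm]
  have indep : ∀ i j, i ≠ j → IndepLaw p (X i) (X j) := fun i j hij =>
    indepLaw_of_mEntropy_prod_eq_add hp0 hp1 (by rw [h2 i j hij, h1, h1]; ring)
  -- any two of the three variables determine the third
  have det : ∀ i j, i ≠ j → ∀ ω, 0 < p ω →
      law p (fun ω => (X i ω, X j ω)) (X i ω, X j ω) = law p J (J ω) := fun i j hij ω hω =>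
    law_comp_eq_of_mEntropy_comp_eq hp0 (fun F => (F ⟨i, mem_univ i⟩, F ⟨j, mem_univ j⟩)) J
      (by rw [h2 i j hij, h3]) hω
  obtain ⟨M, hM, hH⟩ := exists_mEntropy_eq_logb_nat hp0 hp1 fun ω ω' hω hω' =>
    law_const_of_indepLaw hp0 (indep 0 1 (by decide)) (indep 0 2 (by decide))
      (indep 1 2 (by decide))
      (fun ω hω => (det 0 2 (by decide) ω hω).trans (det 1 2 (by decide) ω hω).symm) hω hω'
  exact ⟨M, hM, (h1 0).symm.trans hH⟩

lemma isEntropic_of_eq_entFn {V Ω D : Type*} [Fintype V] [DecidableEq V] [Fintype Ω]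
    [DecidableEq D] [Countable D] {g : Finset V → ℝ} (p : Ω → ℝ) (X : V → Ω → D)
    (hp0 : ∀ ω, 0 ≤ p ω) (hp1 : ∑ ω, p ω = 1) (hg : ∀ S, g S = entFn p X S) :
    IsEntropic g := by
  obtain ⟨ι, hι⟩ := Countable.exists_injective_nat D
  set e := (Fintype.equivFin Ω).symm
  refine ⟨Fintype.card Ω, fun i => p (e i), fun v i => ι (X v (e i)), fun i => hp0 (e i),
    by rw [e.sum_comp p, hp1], fun S => ?_⟩
  rw [hg, entFn, entFn, ← mEntropy_comp_equiv e,
    ← mEntropy_comp_of_injective (φ := fun F v => ι (F v)) fun F G h => funext fun v =>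
      hι (congrFun h v)]

section ParityWitness

variable (G : Type*) [AddCommGroup G]

def parityVars : Fin 3 → G × G → G := ![Prod.fst, Prod.snd, fun x => x.1 + x.2]

variable {G}

lemma parityVars_pair_injective {i j : Fin 3} (hij : i ≠ j) :
    (fun x => (parityVars G i x, parityVars G j x)).Injective := by
  intro x y h
  fin_cases i <;> fin_cases j <;> simp_all [parityVars, Prod.ext_iff] <;> grind

end ParityWitness

theorem isEntropic_logb_card_mul_hparity (G : Type*) [AddCommGroup G] [Fintype G]
    [DecidableEq G] : IsEntropic (fun S => logb 2 (Fintype.card G) * hparity S) := by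
  refine isEntropic_of_eq_entFn _ (parityVars G) (fun _ => by positivity) sum_inv_card
    fun S => ?_
  obtain h0 | h1 | h2 : #S = 0 ∨ #S = 1 ∨ 1 < #S := by omega
  · obtain rfl := card_eq_zero.1 h0
    rw [entFn, mEntropy_eq_zero_of_const (fun _ => by positivity) sum_inv_card
      fun _ _ => funext fun v => absurd v.2 (notMem_empty _)]
    simp [hparity]
  · obtain ⟨i, rfl⟩ := card_eq_one.1 h1
    rw [hparity_singleton, mul_one, entFn_singleton, mEntropy_uniform_of_bijective_prod
      (Finite.injective_iff_bijective.1 (parityVars_pair_injective (j := i + 1) ?_))]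
    fin_cases i <;> decide
  · obtain ⟨i, hi, j, hj, hij⟩ := one_lt_card.1 h2
    have hinj : (fun x (v : {v // v ∈ S}) => parityVars G v x).Injective := fun x y h =>
      parityVars_pair_injective hij
        (Prod.ext (congrFun h ⟨i, hi⟩) (congrFun h ⟨j, hj⟩))
    rw [hparity_of_one_lt_card h2, entFn, mEntropy_uniform_of_injective hinj, Fintype.card_prod,
      Nat.cast_mul, logb_mul (by positivity) (by positivity)]
    ring

lemma natCast_sq_ne_eight (M : ℕ) : (M : ℝ) ^ 2 ≠ 8 := by
  intro h
  have hM : M ^ 2 = 8 := by exact_mod_cast h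
  have : M < 3 := by nlinarith
  interval_cases M <;> simp at hM

theorem not_convex_setOf_isEntropic :
    ¬ Convex ℝ {g : Finset (Fin 3) → ℝ | IsEntropic g} := by
  intro hconv
  have hmid := hconv (isEntropic_logb_card_mul_hparity (ZMod 2))
    (isEntropic_logb_card_mul_hparity (ZMod 4)) (a := 1 / 2) (b := 1 / 2) (by norm_num)
    (by norm_num) (by norm_num)
  have heq : (1 / 2 : ℝ) • (fun S => logb 2 (Fintype.card (ZMod 2)) * hparity S) +
      (1 / 2 : ℝ) • (fun S => logb 2 (Fintype.card (ZMod 4)) * hparity S) =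
      fun S => logb 2 8 / 2 * hparity S := by
    funext S
    simp only [ZMod.card, Pi.add_apply, Pi.smul_apply, smul_eq_mul]
    rw [show (8 : ℝ) = 2 * 4 by norm_num, logb_mul (by norm_num) (by norm_num)]
    push_cast
    ring
  rw [heq] at hmid
  obtain ⟨M, hM, hc⟩ := exists_nat_eq_logb_of_isEntropic_mul_hparity hmid
  have hM2 : (0 : ℝ) < (M : ℝ) ^ 2 := pow_pos (Nat.cast_pos.2 hM) 2
  refine natCast_sq_ne_eight M (logb_injOn_pos one_lt_two hM2 (by norm_num : (0 : ℝ) < 8) ?_)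
  rw [logb_pow, ← hc]
  ring

/-- If `c · h_parity` is entropic then `c = log₂ M` for a positive integer `M`;
consequently `Γ₃*` is not convex. -/
theorem scaled_parity_entropic_iff_log :
    (∀ c : ℝ, 0 < c → IsEntropic (fun S => c * hparity S) →
      ∃ M : ℕ, 0 < M ∧ c = Real.logb 2 M) ∧
    ¬ Convex ℝ {g : Finset (Fin 3) → ℝ | IsEntropic g} :=
  ⟨fun _ _ => exists_nat_eq_logb_of_isEntropic_mul_hparity, not_convex_setOf_isEntropic⟩
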